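/- arXiv:1701.03040 — 2 statements merged into one kernel-verified Lean document; each statement's English description precedes it below -/
import Mathlib

section
/- Let G be a disjoint union of factor-critical graphs, each with more than one vertex. Then every nonempty independent set S of G satisfies d(S) = |S| − |N(S)| < 0. -/
open Classical Finset

/-- Neighborhood of a set of vertices: all vertices adjacent to some vertex of `X`. -/
noncomputable def nbhd {V : Type*} (G : SimpleGraph V) [Fintype V] (X : Finset V) : Finset V :=
  Finset.univ.filter (fun v => ∃ x ∈ X, G.Adj x v)

/-- The difference `d(X) = |X| - |N(X)|`. -/
noncomputable def gdiff {V : Type*} (G : SimpleGraph V) [Fintype V] (X : Finset V) : ℤ :=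
  (X.card : ℤ) - ((nbhd G X).card : ℤ)

/-- `X` is an independent set of `G`. -/
def IsIndep {V : Type*} (G : SimpleGraph V) (X : Finset V) : Prop :=
  ∀ x ∈ X, ∀ y ∈ X, ¬ G.Adj x y

/-- The critical difference `d_c(G) = max { d(X) : X ⊆ V(G) }`. -/
noncomputable def critDiff {V : Type*} (G : SimpleGraph V) [Fintype V] : ℤ :=
  Finset.univ.powerset.sup' ⟨∅, Finset.empty_mem_powerset _⟩ (gdiff G)

/-- `X` is a critical set of `G`. -/
noncomputable def IsCritical {V : Type*} (G : SimpleGraph V) [Fintype V] (X : Finset V) : Prop :=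
  gdiff G X = critDiff G

/-- `ker G` : the intersection of all critical sets of `G`. -/
noncomputable def kerG {V : Type*} (G : SimpleGraph V) [Fintype V] : Finset V :=
  Finset.univ.filter (fun v => ∀ X : Finset V, IsCritical G X → v ∈ X)

/-- `diadem G` : the union of all critical independent sets of `G`. -/
noncomputable def diademG {V : Type*} (G : SimpleGraph V) [Fintype V] : Finset V :=
  Finset.univ.filter (fun v => ∃ X : Finset V, IsCritical G X ∧ IsIndep G X ∧ v ∈ X)

/-- The independence number `α(G)`. -/
noncomputable def alphaG {V : Type*} (G : SimpleGraph V) [Fintype V] : ℕ :=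
  (Finset.univ.powerset.filter (IsIndep G)).sup Finset.card

/-- `core G` : the intersection of all maximum independent sets of `G`. -/
noncomputable def coreG {V : Type*} (G : SimpleGraph V) [Fintype V] : Finset V :=
  Finset.univ.filter (fun v => ∀ I : Finset V, IsIndep G I → I.card = alphaG G → v ∈ I)

/-- `M` is a matching of `G`, given as a finite set of pairwise disjoint edges of `G`. -/
def IsMatchingF {V : Type*} (G : SimpleGraph V) (M : Finset (Sym2 V)) : Prop :=
  (↑M : Set (Sym2 V)) ⊆ G.edgeSet ∧
    ∀ e₁ ∈ M, ∀ e₂ ∈ M, e₁ ≠ e₂ → ∀ v : V, v ∈ e₁ → v ∉ e₂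

/-- The matching number `μ(G)`. -/
noncomputable def matchNum {V : Type*} (G : SimpleGraph V) [Fintype V] : ℕ :=
  ((Finset.univ : Finset (Finset (Sym2 V))).filter (IsMatchingF G)).sup Finset.card

/-- There is a matching from `A` into `B`: an injection of `A` into `B` along edges of `G`. -/
def MatchingFromInto {V : Type*} (G : SimpleGraph V) (A B : Finset V) : Prop :=
  ∃ f : V → V, Set.InjOn f ↑A ∧ ∀ a ∈ A, f a ∈ B ∧ G.Adj a (f a)

/-- The auxiliary bipartite graph `H_X` on vertex set `X ∪ N(X) ∪ {v, w}`, where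
`v = Sum.inr false` and `w = Sum.inr true`.  Its edges are the edges of `G` between
`X` and `N(X)`, the edge `vw`, and all edges from `v` to `N(X)`. -/
noncomputable def HX {V : Type*} (G : SimpleGraph V) [Fintype V] (X : Finset V) :
    SimpleGraph ({a : V // a ∈ X ∪ nbhd G X} ⊕ Bool) :=
  SimpleGraph.fromRel (fun p q =>
    match p, q with
    | Sum.inl a, Sum.inl b => a.1 ∈ X ∧ b.1 ∈ nbhd G X ∧ G.Adj a.1 b.1
    | Sum.inr false, Sum.inr true => True
    | Sum.inr false, Sum.inl b => b.1 ∈ nbhd G X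
    | _, _ => False)

/-- The copy of `X` inside the vertex set of `H_X`. -/
noncomputable def Xlift {V : Type*} (G : SimpleGraph V) [Fintype V] (X : Finset V) :
    Finset ({a : V // a ∈ X ∪ nbhd G X} ⊕ Bool) :=
  Finset.univ.filter (fun p => ∃ a : {a : V // a ∈ X ∪ nbhd G X}, p = Sum.inl a ∧ a.1 ∈ X)

/-- Edmonds–Gallai set `D`: vertices missed by some maximum matching. -/
noncomputable def gallaiD {V : Type*} (G : SimpleGraph V) [Fintype V] : Finset V :=
  Finset.univ.filter (fun v => ∃ M : Finset (Sym2 V),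
    IsMatchingF G M ∧ M.card = matchNum G ∧ ∀ e ∈ M, v ∉ e)

/-- Edmonds–Gallai set `A = N(D) - D`. -/
noncomputable def gallaiA {V : Type*} (G : SimpleGraph V) [Fintype V] : Finset V :=
  nbhd G (gallaiD G) \ gallaiD G

/-- Edmonds–Gallai set `C = V - A - D`. -/
noncomputable def gallaiC {V : Type*} (G : SimpleGraph V) [Fintype V] : Finset V :=
  (Finset.univ \ gallaiD G) \ gallaiA G

/-- The vertices of the singleton components of `G[D]`. -/
noncomputable def singlesD {V : Type*} (G : SimpleGraph V) [Fintype V] : Finset V :=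
  (gallaiD G).filter (fun v => ∀ w ∈ gallaiD G, ¬ G.Adj v w)

/-!
In every component `C` of `G` that meets `S` delete a neighbour `r_C ∈ N(S)` of a vertex of `S`
(it lies outside `S` because `S` is independent); in the other components delete any vertex
outside `S`. The perfect matchings of the graphs `C - r_C` send the vertices of `S` to distinct
neighbours other than the deleted vertices, so `S` injects into `N(S)` minus one `r_C`.
-/

section

variable {V : Type*} {G : SimpleGraph V}

def SimpleGraph.puncturedComponent (G : SimpleGraph V) (r : V) : Set V :=
  {w | G.Reachable r w ∧ w ≠ r}

theorem SimpleGraph.Reachable.exists_adj_of_ne {v w : V} (h : G.Reachable v w) (hne : w ≠ v) :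
    ∃ u, G.Adj v u := by
  obtain ⟨p⟩ := h
  exact ⟨_, p.adj_snd (p.not_nil_of_ne hne.symm)⟩

theorem SimpleGraph.Subgraph.IsPerfectMatching.exists_partner_induce {s : Set V}
    {M : (G.induce s).Subgraph} (hM : M.IsPerfectMatching) :
    ∃ f : V → V, Set.MapsTo f s s ∧ Set.InjOn f s ∧ ∀ v ∈ s, G.Adj v (f v) := by
  have hpartner (v : s) : ∃ w, M.Adj v w := (hM.1 (hM.2 v)).exists
  choose p hp using hpartner
  refine ⟨fun v => if hv : v ∈ s then p ⟨v, hv⟩ else v, fun v hv => ?_, fun v hv w hw hvw => ?_,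
    fun v hv => ?_⟩
  · simp only [dif_pos hv]
    exact (p _).2
  · simp only [dif_pos hv, dif_pos hw] at hvw
    have hadj := hp ⟨w, hw⟩
    rw [← Subtype.ext hvw] at hadj
    exact congrArg Subtype.val (hM.1.eq_of_adj_right (hp ⟨v, hv⟩) hadj)
  · simp only [dif_pos hv]
    exact M.adj_sub (hp ⟨v, hv⟩)

variable [Fintype V] {S : Finset V}

theorem mem_nbhd {X : Finset V} {v : V} : v ∈ nbhd G X ↔ ∃ x ∈ X, G.Adj x v := by
  simp only [nbhd, mem_filter, mem_univ, true_and]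

theorem IsIndep.exists_root (hind : IsIndep G S) (hadj : ∀ v, ∃ w, G.Adj v w)
    (c : G.ConnectedComponent) :
    ∃ r, G.connectedComponentMk r = c ∧ r ∉ S ∧
      ∀ t ∈ S, G.connectedComponentMk t = c → r ∈ nbhd G S := by
  by_cases hc : ∃ t ∈ S, G.connectedComponentMk t = c
  · obtain ⟨t, ht, rfl⟩ := hc
    obtain ⟨u, htu⟩ := hadj t
    refine ⟨u, (SimpleGraph.ConnectedComponent.connectedComponentMk_eq_of_adj htu).symm,
      fun hu => hind t ht u hu htu, fun _ _ _ => mem_nbhd.2 ⟨t, ht, htu⟩⟩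
  · obtain ⟨v, rfl⟩ := c.exists_rep
    exact ⟨v, rfl, fun hv => hc ⟨v, hv, rfl⟩, fun t ht htv => absurd ⟨t, ht, htv⟩ hc⟩

theorem IsIndep.exists_injOn_nbhd_erase [DecidableEq V] (hind : IsIndep G S) (hS : S.Nonempty)
    (hadj : ∀ v, ∃ w, G.Adj v w)
    (hpartner : ∀ r : V, ∃ f : V → V, Set.MapsTo f (G.puncturedComponent r)
      (G.puncturedComponent r) ∧ Set.InjOn f (G.puncturedComponent r) ∧
      ∀ v ∈ G.puncturedComponent r, G.Adj v (f v)) :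
    ∃ d ∈ nbhd G S, ∃ g : V → V, Set.InjOn g S ∧ ∀ t ∈ S, g t ∈ (nbhd G S).erase d := by
  choose root hroot_mk hroot_notMem hroot_nbhd using hind.exists_root hadj
  choose p hp_maps hp_inj hp_adj using hpartner
  let g t := p (root (G.connectedComponentMk t)) t
  have hmem (t) (ht : t ∈ S) : t ∈ G.puncturedComponent (root (G.connectedComponentMk t)) :=
    ⟨SimpleGraph.ConnectedComponent.exact (hroot_mk _),
      fun h => hroot_notMem _ (h ▸ ht)⟩
  have hg_mk (t) (ht : t ∈ S) : G.connectedComponentMk (g t) = G.connectedComponentMk t :=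
    (SimpleGraph.ConnectedComponent.connectedComponentMk_eq_of_adj (hp_adj _ t (hmem t ht))).symm
  obtain ⟨s, hs⟩ := hS
  refine ⟨root (G.connectedComponentMk s), hroot_nbhd _ s hs rfl, g, fun t ht t' ht' htt' => ?_,
    fun t ht => mem_erase.2 ⟨fun hgt => ?_, ?_⟩⟩
  · have hcomp : G.connectedComponentMk t = G.connectedComponentMk t' := by
      rw [← hg_mk t ht, ← hg_mk t' ht', htt']
    have hgt' : g t' = p (root (G.connectedComponentMk t)) t' := by rw [hcomp]
    exact hp_inj _ (hmem t ht) (hcomp ▸ hmem t' ht') (htt'.trans hgt')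
  · have hcomp : G.connectedComponentMk t = G.connectedComponentMk s := by
      rw [← hg_mk t ht, hgt, hroot_mk]
    exact (hp_maps _ (hmem t ht)).2 (hgt.trans (congrArg root hcomp.symm))
  · exact mem_nbhd.2 ⟨t, ht, hp_adj _ t (hmem t ht)⟩

end

theorem stmt16_general {V : Type*} (G : SimpleGraph V) [Fintype V]
    (hbig : ∀ v : V, ∃ w : V, w ≠ v ∧ G.Reachable v w)
    (hfc : ∀ v : V, ∃ M : SimpleGraph.Subgraph
        (SimpleGraph.induce {w : V | G.Reachable v w ∧ w ≠ v} G), M.IsPerfectMatching)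
    (S : Finset V) (hS : S.Nonempty) (hind : IsIndep G S) :
    gdiff G S < 0 := by
  have hadj (v : V) : ∃ w, G.Adj v w :=
    have ⟨w, hwv, hvw⟩ := hbig v
    hvw.exists_adj_of_ne hwv
  obtain ⟨d, hd, g, hg_inj, hg_maps⟩ := hind.exists_injOn_nbhd_erase hS hadj
    fun r => (hfc r).choose_spec.exists_partner_induce
  have hcard : S.card < (nbhd G S).card :=
    (card_le_card_of_injOn g hg_maps hg_inj).trans_lt (card_erase_lt_of_mem hd)
  simp only [gdiff]
  omega

/-- in a disjoint union of factor-critical graphs of order > 1,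
every nonempty independent set has negative difference. -/
theorem stmt16 {V : Type*} (G : SimpleGraph V) [Fintype V] [DecidableEq V] [DecidableRel G.Adj]
    (hbig : ∀ v : V, ∃ w : V, w ≠ v ∧ G.Reachable v w)
    (hfc : ∀ v : V, ∃ M : SimpleGraph.Subgraph
        (SimpleGraph.induce {w : V | G.Reachable v w ∧ w ≠ v} G), M.IsPerfectMatching)
    (S : Finset V) (hS : S.Nonempty) (hind : IsIndep G S) :
    gdiff G S < 0 :=
  stmt16_general G hbig hfc S hS hind
end

section
/- If I is a maximum independent set of a graph H containing a vertex w that is adjacent to all vertices of N(X) for an independent set X with the property that every proper subset Y ⊊ X has d(Y) < d(X) > 0, then in the bipartite auxiliary graph H_X (vertex set X ∪ N(X) ∪ {v,w}, edges of G between X and N(X), plus vw and all vx for x ∈ N(X)), every maximum independent set containing w equals X ∪ {w}. -/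
open Classical Finset

/-!
A maximum independent set `I` of `H_X` containing `w` avoids `v`, so it consists of `w`, a part
`A ⊆ X` and a part `B ⊆ N(X)` with no `G`-edges between `A` and `B`; hence `|B| ≤ |N(X)| - |N(A)|`.
If `B ≠ ∅` then `A ≠ X`, and the minimality `d(A) < d(X)` gives `|A| + |B| < |X|`, so `I` would be
smaller than the independent set `X ∪ {w}`. Thus `I ⊆ X ∪ {w}`, and maximality forces equality.
-/

section Deficiency

variable {V : Type*} {G : SimpleGraph V} [Fintype V]

theorem nbhd_mono {A X : Finset V} (h : A ⊆ X) : nbhd G A ⊆ nbhd G X := by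
  intro v hv
  simp only [nbhd, mem_filter, mem_univ, true_and] at hv ⊢
  obtain ⟨a, ha, hav⟩ := hv
  exact ⟨a, h ha, hav⟩

theorem card_le_alphaG {s : Finset V} (hs : IsIndep G s) : s.card ≤ alphaG G :=
  le_sup (f := card) (mem_filter.2 ⟨mem_powerset.2 (subset_univ s), hs⟩)

theorem card_add_card_lt_of_disjoint_nbhd {X A B : Finset V}
    (hmin : ∀ Y ⊂ X, gdiff G Y < gdiff G X) (hAX : A ⊆ X) (hBX : B ⊆ nbhd G X)
    (hAB : Disjoint B (nbhd G A)) (hB : B.Nonempty) : A.card + B.card < X.card := by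
  have hB_sub : B ⊆ nbhd G X \ nbhd G A := subset_sdiff.2 ⟨hBX, hAB⟩
  have hA_ne : A ≠ X := by
    rintro rfl
    obtain ⟨b, hb⟩ := hB
    simpa using hB_sub hb
  have hB_card : B.card + (nbhd G A).card ≤ (nbhd G X).card := by
    have := card_le_card hB_sub
    rw [card_sdiff_of_subset (nbhd_mono hAX)] at this
    have := card_le_card (nbhd_mono (G := G) hAX)
    omega
  have := hmin A (ssubset_of_subset_of_ne hAX hA_ne)
  simp only [gdiff] at this
  omega

end Deficiency

section AuxiliaryGraph

variable {V : Type*} {G : SimpleGraph V} [Fintype V] {X : Finset V}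

theorem HX_adj_inl_inl_iff {a b : {a : V // a ∈ X ∪ nbhd G X}} :
    (HX G X).Adj (.inl a) (.inl b) ↔
      a.1 ∈ X ∧ b.1 ∈ nbhd G X ∧ G.Adj a b ∨ b.1 ∈ X ∧ a.1 ∈ nbhd G X ∧ G.Adj b a := by
  simp only [HX, SimpleGraph.fromRel_adj, ne_eq, Sum.inl.injEq, and_iff_right_iff_imp]
  rintro (⟨-, -, h⟩ | ⟨-, -, h⟩) rfl <;> exact h.ne rfl

theorem HX_adj_inr_false_inr_true : (HX G X).Adj (.inr false) (.inr true) := by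
  simp [HX]

theorem HX_not_adj_inl_inr_true (a : {a : V // a ∈ X ∪ nbhd G X}) :
    ¬ (HX G X).Adj (.inl a) (.inr true) := by
  simp [HX]

theorem inl_mem_Xlift {a : {a : V // a ∈ X ∪ nbhd G X}} : .inl a ∈ Xlift G X ↔ a.1 ∈ X := by
  simp only [Xlift, mem_filter, mem_univ, true_and, Sum.inl.injEq]
  exact ⟨fun ⟨_, hab, hb⟩ => hab ▸ hb, fun ha => ⟨a, rfl, ha⟩⟩

theorem card_Xlift : (Xlift G X).card = X.card := by
  have : Xlift G X = (X.subtype (· ∈ X ∪ nbhd G X)).map .inl := by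
    ext p
    simp only [Xlift, mem_filter, mem_univ, true_and, mem_map, mem_subtype,
      Function.Embedding.inl_apply]
    exact ⟨fun ⟨a, hp, ha⟩ => ⟨a, ha, hp.symm⟩, fun ⟨a, ha, hp⟩ => ⟨a, hp.symm, ha⟩⟩
  rw [this, card_map, card_subtype, filter_true_of_mem fun a ha => mem_union_left _ ha]

theorem isIndep_Xlift_union (hind : IsIndep G X) :
    IsIndep (HX G X) (Xlift G X ∪ {.inr true}) := by
  simp only [IsIndep, Xlift, mem_union, mem_filter, mem_univ, true_and, mem_singleton]
  rintro _ (⟨a, rfl, ha⟩ | rfl) _ (⟨b, rfl, hb⟩ | rfl)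
  · rw [HX_adj_inl_inl_iff]
    rintro (⟨-, -, h⟩ | ⟨-, -, h⟩)
    · exact hind _ ha _ hb h
    · exact hind _ hb _ ha h
  · exact HX_not_adj_inl_inr_true a
  · exact fun h => HX_not_adj_inl_inr_true b h.symm
  · exact (HX G X).irrefl

theorem card_lt_of_isIndep_HX_of_inl_mem_of_notMem (hmin : ∀ Y ⊂ X, gdiff G Y < gdiff G X)
    {I : Finset ({a : V // a ∈ X ∪ nbhd G X} ⊕ Bool)} (hI : IsIndep (HX G X) I)
    (hw : .inr true ∈ I) {b : {a : V // a ∈ X ∪ nbhd G X}} (hb : .inl b ∈ I) (hbX : b.1 ∉ X) :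
    I.card < X.card + 1 := by
  set T : Finset V := I.toLeft.map (.subtype _)
  have hT : ∀ {x}, x ∈ T ↔ ∃ h : x ∈ X ∪ nbhd G X, .inl ⟨x, h⟩ ∈ I := by
    simp [T]
  have hv : .inr false ∉ I := fun hv => hI _ hv _ hw HX_adj_inr_false_inr_true
  have hI_right : I.toRight ⊆ {true} := by
    rintro (_ | _) hc
    · exact absurd (mem_toRight.1 hc) hv
    · exact mem_singleton_self _
  have hI_card : I.card ≤ T.card + 1 := by
    rw [← card_toLeft_add_card_toRight, card_map]
    simpa using card_le_card hI_right
  have hAB : (T.filter (· ∈ X)).card + (T.filter (· ∉ X)).card < X.card := by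
    refine card_add_card_lt_of_disjoint_nbhd hmin (fun _ hx => (mem_filter.1 hx).2) ?_ ?_ ?_
    · intro x hx
      obtain ⟨hxT, hxX⟩ := mem_filter.1 hx
      obtain ⟨h, -⟩ := hT.1 hxT
      exact (mem_union.1 h).resolve_left hxX
    · refine disjoint_left.2 fun y hy hyA => ?_
      obtain ⟨hyT, hyX⟩ := mem_filter.1 hy
      obtain ⟨x, hxA, hxy⟩ := (mem_filter.1 hyA).2
      obtain ⟨hxT, hxX⟩ := mem_filter.1 hxA
      obtain ⟨_, hxI⟩ := hT.1 hxT
      obtain ⟨hyN, hyI⟩ := hT.1 hyT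
      exact hI _ hxI _ hyI
        (HX_adj_inl_inl_iff.2 (.inl ⟨hxX, (mem_union.1 hyN).resolve_left hyX, hxy⟩))
    · exact ⟨b, mem_filter.2 ⟨hT.2 ⟨b.2, hb⟩, hbX⟩⟩
  rw [card_filter_add_card_filter_not] at hAB
  omega

end AuxiliaryGraph

theorem stmt19_general {V : Type*} (G : SimpleGraph V) [Fintype V]
    (X : Finset V) (hind : IsIndep G X)
    (hmin : ∀ Y ⊂ X, gdiff G Y < gdiff G X)
    (I : Finset ({a : V // a ∈ X ∪ nbhd G X} ⊕ Bool))
    (hI : IsIndep (HX G X) I) (hImax : I.card = alphaG (HX G X))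
    (hw : Sum.inr true ∈ I) :
    I = Xlift G X ∪ {Sum.inr true} := by
  have hJ_card : (Xlift G X ∪ {.inr true}).card = X.card + 1 := by
    rw [card_union_of_disjoint (disjoint_singleton_right.2 (by simp [Xlift])), card_Xlift,
      card_singleton]
  have hJ_le : (Xlift G X ∪ {.inr true}).card ≤ I.card :=
    hImax ▸ card_le_alphaG (isIndep_Xlift_union hind)
  refine eq_of_subset_of_card_le (fun p hp => ?_) hJ_le
  rcases p with b | (_ | _)
  · by_contra hbJ
    have hbX : b.1 ∉ X := fun hbX => hbJ (mem_union_left _ (inl_mem_Xlift.2 hbX))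
    have := card_lt_of_isIndep_HX_of_inl_mem_of_notMem hmin hI hw hp hbX
    omega
  · exact absurd HX_adj_inr_false_inr_true (hI _ hp _ hw)
  · exact mem_union_right _ (mem_singleton_self _)

/-- in `H_X`, every maximum independent set containing `w` equals `X ∪ {w}`. -/
theorem stmt19 {V : Type*} (G : SimpleGraph V) [Fintype V] [DecidableRel G.Adj]
    (X : Finset V) (hind : IsIndep G X) (hpos : 0 < gdiff G X)
    (hmin : ∀ Y ⊂ X, gdiff G Y < gdiff G X)
    (I : Finset ({a : V // a ∈ X ∪ nbhd G X} ⊕ Bool))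
    (hI : IsIndep (HX G X) I) (hImax : I.card = alphaG (HX G X))
    (hw : Sum.inr true ∈ I) :
    I = Xlift G X ∪ {Sum.inr true} :=
  stmt19_general G X hind hmin I hI hImax hw
end
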